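/- Let k ≥ 1, let m ∈ ℤ and let f = Σ_{p = p₀}^{P} a_p x^{m+p} y^p ∈ ℂ[x,y] be a weighted-homogeneous polynomial of degree m (weights deg x = 1, deg y = −1), where a_p ∈ ℂ, a_{p₀} ≠ 0, p₀ ≥ 0, and 0 ≤ m + p₀ ≤ k − 1. Then the ideal of ℂ[x,y] generated by f and x^k equals the ideal generated by x^{m+p₀} y^{p₀} and x^k. -/
import Mathlib


open MvPolynomial

/-- Let `k ≥ 1`, `m ∈ ℤ`, and let
`f = Σ_{p = p₀}^{P} a_p x^(m+p) y^p ∈ ℂ[x,y]` be weighted-homogeneous of degree `m`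
(weights `deg x = 1`, `deg y = −1`), with `a_{p₀} ≠ 0`, `p₀ ≥ 0`, `0 ≤ m + p₀ ≤ k − 1`.
Then `(f, x^k) = (x^(m+p₀) y^(p₀), x^k)` as ideals of `ℂ[x,y]`. -/
theorem span_homogeneous_eq_span_monomial (k : ℕ) (hk : 1 ≤ k) (m : ℤ)
    (p₀ P : ℕ) (hp₀P : p₀ ≤ P) (a : ℕ → ℂ) (ha : a p₀ ≠ 0)
    (hm0 : 0 ≤ m + (p₀ : ℤ)) (hmk : m + (p₀ : ℤ) ≤ (k : ℤ) - 1)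
    (f : MvPolynomial (Fin 2) ℂ)
    (hf : f = ∑ p ∈ Finset.Icc p₀ P,
        C (a p) * (X 0 : MvPolynomial (Fin 2) ℂ) ^ (m + (p : ℤ)).toNat * X 1 ^ p) :
    Ideal.span {f, (X 0 : MvPolynomial (Fin 2) ℂ) ^ k} =
      Ideal.span {(X 0 : MvPolynomial (Fin 2) ℂ) ^ (m + (p₀ : ℤ)).toNat * X 1 ^ p₀,
        (X 0 : MvPolynomial (Fin 2) ℂ) ^ k} := by
  set e₀ := (m + (p₀ : ℤ)).toNat with he₀
  set M : MvPolynomial (Fin 2) ℂ := X 0 ^ e₀ * X 1 ^ p₀ with hM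
  set g : MvPolynomial (Fin 2) ℂ :=
    ∑ j ∈ Finset.range (P + 1 - p₀), C (a (p₀ + j)) * (X 0 * X 1) ^ j with hg
  have hexp : ∀ j : ℕ, (m + ((p₀ + j : ℕ) : ℤ)).toNat = e₀ + j := by
    intro j; push_cast; omega
  have hfg : f = M * g := by
    rw [hf, hg, Finset.mul_sum, ← Finset.Ico_add_one_right_eq_Icc, Finset.sum_Ico_eq_sum_range]
    refine Finset.sum_congr rfl fun j _ => ?_
    rw [hexp j, hM]
    ring
  -- split off constant term of g
  have hn : P + 1 - p₀ = (P - p₀) + 1 := by omega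
  set h : MvPolynomial (Fin 2) ℂ :=
    ∑ j ∈ Finset.range (P - p₀), C (a (p₀ + (j + 1))) * (X 0 * X 1) ^ j with hh
  have hgsplit : g = C (a p₀) + X 0 * X 1 * h := by
    rw [hg, hn, Finset.sum_range_succ', hh, Finset.mul_sum]
    simp only [pow_zero, mul_one, Nat.add_zero]
    rw [add_comm]
    congr 1
    exact Finset.sum_congr rfl fun j _ => by ring
  set c : ℂ := a p₀ with hc
  set u : MvPolynomial (Fin 2) ℂ := C (-(c⁻¹)) * (X 0 * X 1) * h with hu
  have hcu : C (c⁻¹) * g = 1 - u := by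
    rw [hgsplit, hu, mul_add, ← C_mul, inv_mul_cancel₀ ha, C_1, map_neg]
    ring
  set S : MvPolynomial (Fin 2) ℂ := ∑ i ∈ Finset.range k, u ^ i with hS
  have hgeom : (1 - u) * S = 1 - u ^ k := by
    have := geom_sum_mul u k
    linear_combination -this
  have hMrep : M = (C (c⁻¹) * S) * f + (M * C (-(c⁻¹)) ^ k * X 1 ^ k * h ^ k) * X 0 ^ k := by
    have h1 : M * ((C (c⁻¹) * g) * S) = (C (c⁻¹) * S) * f := by
      rw [hfg]; ring
    rw [hcu, hgeom] at h1
    have hu_k : u ^ k = C (-(c⁻¹)) ^ k * X 0 ^ k * X 1 ^ k * h ^ k := by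
      rw [hu]; ring
    linear_combination h1 + M * hu_k
  apply le_antisymm <;> rw [Ideal.span_le] <;>
    rintro x (rfl | rfl) <;>
      try exact Ideal.subset_span (Set.mem_insert_of_mem _ rfl)
  · -- f ∈ span {M, X0^k}
    rw [SetLike.mem_coe, Ideal.mem_span_pair]
    exact ⟨g, 0, by rw [hfg]; ring⟩
  · -- M ∈ span {f, X0^k}
    rw [SetLike.mem_coe, Ideal.mem_span_pair]
    exact ⟨C (c⁻¹) * S, M * C (-(c⁻¹)) ^ k * X 1 ^ k * h ^ k, hMrep.symm⟩
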